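/- Let H be a circuit-hyperplane of a matroid M, let M' be the relaxation of M along H, and let e be an element of E(M) − H that is not a coloop of M. Then H is a circuit-hyperplane of M\e, and M'\e is the relaxation of M\e along H. -/

import Mathlib

set_option autoImplicit false

open Set

universe u v

namespace NearlyBinary

variable {α : Type u} {β : Type v}

/-- `C` is a circuit of `M`: a minimal dependent set. -/
def Circuit (M : Matroid α) (C : Set α) : Prop :=
  M.Dep C ∧ ∀ e ∈ C, M.Indep (C \ {e})

/-- `H` is a hyperplane of `M`: a maximal proper flat. -/
def Hyperplane (M : Matroid α) (H : Set α) : Prop :=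
  M.IsFlat H ∧ H ≠ M.E ∧ ∀ F, M.IsFlat F → H ⊂ F → F = M.E

/-- `H` is a circuit-hyperplane of `M`. -/
def CircuitHyperplane (M : Matroid α) (H : Set α) : Prop :=
  Circuit M H ∧ Hyperplane M H

/-- `M'` is the relaxation of `M` along `H` : same ground set, and the bases of `M'`
are the bases of `M` together with `H`. -/
def IsRelaxation (M : Matroid α) (H : Set α) (M' : Matroid α) : Prop :=
  M'.E = M.E ∧ ∀ B, M'.IsBase B ↔ (M.IsBase B ∨ B = H)

/-- Deletion of the set `D` from `M`. -/
def del (M : Matroid α) (D : Set α) : Matroid α := M.restrict (M.E \ D)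

/-- Contraction of the set `C` in `M`. -/
def con (M : Matroid α) (C : Set α) : Matroid α := ((M✶).restrict (M.E \ C))✶

/-- `N` is a minor of `M` (on the same type), obtained by a contraction and a deletion. -/
def IsMinorOf (N M : Matroid α) : Prop :=
  ∃ C D, C ⊆ M.E ∧ D ⊆ M.E ∧ Disjoint C D ∧ N = del (con M C) D

/-- `M` is binary: representable over `GF(2)`. -/
def IsBinary (M : Matroid α) : Prop :=
  ∃ (ι : Type u) (φ : α → ι → ZMod 2),
    ∀ I, I ⊆ M.E → (M.Indep I ↔ LinearIndependent (ZMod 2) (fun x : I => φ x.1))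

def IsLoop (M : Matroid α) (e : α) : Prop := e ∈ M.E ∧ ¬ M.Indep {e}

def IsColoop (M : Matroid α) (e : α) : Prop := e ∈ M.E ∧ ∀ B, M.IsBase B → e ∈ B

/-- `x` and `y` are parallel: distinct elements forming a two-element circuit. -/
def Parallel (M : Matroid α) (x y : α) : Prop := x ≠ y ∧ Circuit M {x, y}

/-- A separator of `M`: a set such that every circuit lies inside it or inside its complement. -/
def Separator (M : Matroid α) (S : Set α) : Prop :=
  S ⊆ M.E ∧ ∀ C, Circuit M C → C ⊆ S ∨ C ⊆ M.E \ S

/-- `M` is disconnected: its ground set is partitioned into two nonempty separators. -/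
def Disconnected (M : Matroid α) : Prop :=
  ∃ S, Separator M S ∧ S.Nonempty ∧ (M.E \ S).Nonempty

/-- `M` is connected (2-connected). -/
def Connected (M : Matroid α) : Prop := ¬ Disconnected M

/-- The rank (in `ℕ∞`) of a set `X` in `M`. -/
noncomputable def eRk (M : Matroid α) (X : Set α) : ℕ∞ :=
  ⨆ I ∈ {I | M.Indep I ∧ I ⊆ X}, I.encard

/-- `M` has a (Tutte) `k`-separation. -/
def HasSep (M : Matroid α) (k : ℕ) : Prop :=
  ∃ X, X ⊆ M.E ∧ (k : ℕ∞) ≤ X.encard ∧ (k : ℕ∞) ≤ (M.E \ X).encard ∧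
    eRk M X + eRk M (M.E \ X) ≤ eRk M M.E + ((k : ℕ∞) - 1)

/-- `M` is `n`-connected in the sense of Tutte. -/
def TutteConnected (n : ℕ) (M : Matroid α) : Prop :=
  ∀ k, 1 ≤ k → k < n → ¬ HasSep M k

/-- `M` is isomorphic to the uniform matroid `U_{r,m}`. -/
def IsUniform (M : Matroid α) (r m : ℕ) : Prop :=
  M.E.encard = m ∧ ∀ B, M.IsBase B ↔ (B ⊆ M.E ∧ B.encard = r)

/-- `M` is isomorphic to the direct sum `U_{n-1,n} ⊕ U_{1,k}`. -/
def IsUnifSumUnif (M : Matroid α) (n k : ℕ) : Prop :=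
  ∃ S P : Set α, Disjoint S P ∧ S ∪ P = M.E ∧ S.encard = n ∧ P.encard = k ∧
    ∀ B, M.IsBase B ↔ ∃ s ∈ S, ∃ p ∈ P, B = (S \ {s}) ∪ {p}

/-- `M` is the 2-sum of `M₁` and `M₂` with basepoint `p`, described by its circuits. -/
def IsTwoSum (M₁ M₂ : Matroid α) (p : α) (M : Matroid α) : Prop :=
  M₁.E ∩ M₂.E = {p} ∧
  ¬ IsLoop M₁ p ∧ ¬ IsColoop M₁ p ∧ ¬ IsLoop M₂ p ∧ ¬ IsColoop M₂ p ∧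
  M.E = (M₁.E ∪ M₂.E) \ {p} ∧
  ∀ C, Circuit M C ↔
    ((Circuit M₁ C ∧ p ∉ C) ∨ (Circuit M₂ C ∧ p ∉ C) ∨
      ∃ C₁ C₂, Circuit M₁ C₁ ∧ Circuit M₂ C₂ ∧ p ∈ C₁ ∧ p ∈ C₂ ∧
        C = (C₁ \ {p}) ∪ (C₂ \ {p}))

/-- `M` is isomorphic to `N`. -/
def Iso (M : Matroid β) (N : Matroid α) : Prop :=
  ∃ f : β → α, Set.BijOn f M.E N.E ∧ ∀ I, I ⊆ M.E → (M.Indep I ↔ N.Indep (f '' I))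

/-- `M` is the vector matroid, with ground set `G`, of the vectors `φ` over `GF(2)`. -/
def IsVecMatroid {ι : Type v} (M : Matroid α) (φ : α → ι → ZMod 2) (G : Set α) : Prop :=
  M.E = G ∧ ∀ I, I ⊆ G → (M.Indep I ↔ LinearIndependent (ZMod 2) (fun x : I => φ x.1))


/-- Auxiliary: the closure of any set is a flat. -/
lemma closure_flat' (M : Matroid α) (X : Set α) : M.IsFlat (M.closure X) :=
  ⟨fun _I Y hI hIY => hIY.subset_closure.trans
    (by rw [hI.closure_eq_closure, M.closure_closure]), M.closure_subset_ground X⟩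

/-- Auxiliary: the closure in a restriction. -/
lemma restrict_closure' (M : Matroid α) {R X : Set α} (hR : R ⊆ M.E) (hX : X ⊆ R) :
    (M.restrict R).closure X = M.closure X ∩ R := by
  obtain ⟨I, hI⟩ := (M.restrict R).exists_isBasis X (by simpa using hX)
  have hIM : M.IsBasis I X := ((Matroid.isBasis_restrict_iff hR).1 hI).1
  have hIR : I ⊆ R := hI.subset.trans hX
  rw [← hI.closure_eq_closure, ← hIM.closure_eq_closure,
    hI.indep.closure_eq_setOfPred_isBasis_insert, hIM.indep.closure_eq_setOfPred_isBasis_insert]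
  ext f
  simp only [mem_setOf_eq, Matroid.isBasis_restrict_iff hR, mem_inter_iff, insert_subset_iff,
    and_iff_left hIR]

/-- Auxiliary: bases of a single-element deletion, when some base avoids the element. -/
lemma delete_base_iff' (M : Matroid α) {e : α} {B₀ : Set α} (hB₀ : M.IsBase B₀) (heB₀ : e ∉ B₀) :
    ∀ B, (M.restrict (M.E \ {e})).IsBase B ↔ (M.IsBase B ∧ e ∉ B) := by
  intro B
  rw [Matroid.isBase_restrict_iff diff_subset]
  constructor
  · intro h
    have hB : M.IsBase B := h.isBase_of_isBase_subset hB₀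
      (subset_diff_singleton hB₀.subset_ground heB₀)
    exact ⟨hB, fun heB => (h.subset heB).2 rfl⟩
  · rintro ⟨hB, heB⟩
    exact hB.isBasis_of_subset diff_subset (subset_diff_singleton hB.subset_ground heB)

/-- deleting a non-coloop element outside the relaxed circuit-hyperplane
commutes with relaxation. -/
theorem delete_relaxation {α : Type u} (M M' : Matroid α) (H : Set α) (e : α)
    (hH : CircuitHyperplane M H) (hrel : IsRelaxation M H M')
    (he : e ∈ M.E \ H) (hcl : ¬ IsColoop M e) :
    CircuitHyperplane (del M {e}) H ∧ IsRelaxation (del M {e}) H (del M' {e}) := by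
  simp only [del]
  obtain ⟨⟨hHdep, hHmin⟩, hHflat, hHne, hHmax⟩ := hH
  obtain ⟨heE, heH⟩ := he
  have hHE : H ⊆ M.E := hHdep.subset_ground
  have hHR : H ⊆ M.E \ {e} := subset_diff_singleton hHE heH
  have hRE : M.E \ {e} ⊆ M.E := diff_subset
  -- a base of M avoiding e
  obtain ⟨B₀, hB₀, heB₀⟩ : ∃ B₀, M.IsBase B₀ ∧ e ∉ B₀ := by
    by_contra h
    push_neg at h
    exact hcl ⟨heE, fun B hB => h B hB⟩
  -- H is a base of M'
  have hHbase : M'.IsBase H := (hrel.2 H).2 (Or.inr rfl)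
  have heH' : e ∉ H := heH
  -- ground sets
  have hE' : M'.E = M.E := hrel.1
  have hclH : M.closure H = H := hHflat.closure
  constructor
  · constructor
    · -- Circuit
      constructor
      · rw [Matroid.dep_iff]
        refine ⟨fun hi => hHdep.1 hi.1, by simpa using hHR⟩
      · intro f hf
        rw [Matroid.restrict_indep_iff]
        exact ⟨hHmin f hf, (diff_subset.trans hHR)⟩
    · -- Hyperplane
      have hclH' : (M.restrict (M.E \ {e})).closure H = H := by
        rw [restrict_closure' M hRE hHR, hclH, inter_eq_self_of_subset_left hHR]
      refine ⟨?_, ?_, ?_⟩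
      · rw [← hclH']; exact closure_flat' _ H
      · intro h
        have hB₀H : B₀ ⊆ H := by
          rw [show H = (M.restrict (M.E \ {e})).E from h, Matroid.restrict_ground_eq]
          exact subset_diff_singleton hB₀.subset_ground heB₀
        have : M.closure H = M.E := hB₀.closure_of_superset hB₀H
        rw [hclH] at this
        exact heH (this ▸ heE)
      · intro F hF hHF
        have hFR : F ⊆ M.E \ {e} := by
          simpa using hF.subset_ground
        have hFcl : F = M.closure F ∩ (M.E \ {e}) := by
          rw [← restrict_closure' M hRE hFR, hF.closure]
        have hHclF : H ⊂ M.closure F :=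
          hHF.trans_subset (M.subset_closure F (hFR.trans hRE))
        have : M.closure F = M.E := hHmax _ (closure_flat' M F) hHclF
        rw [Matroid.restrict_ground_eq, hFcl, this,
          inter_eq_self_of_subset_right hRE]
  · -- relaxation
    have hdelM := delete_base_iff' M hB₀ heB₀
    have hdelM' := delete_base_iff' M' (e := e) hHbase heH'
    constructor
    · show (M'.restrict (M'.E \ {e})).E = (M.restrict (M.E \ {e})).E
      rw [Matroid.restrict_ground_eq, Matroid.restrict_ground_eq, hE']
    · intro B
      show (M'.restrict (M'.E \ {e})).IsBase B ↔ ((M.restrict (M.E \ {e})).IsBase B ∨ B = H)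
      rw [hdelM' B, hdelM B, hrel.2 B]
      constructor
      · rintro ⟨hB | rfl, heB⟩
        · exact Or.inl ⟨hB, heB⟩
        · exact Or.inr rfl
      · rintro (⟨hB, heB⟩ | rfl)
        · exact ⟨Or.inl hB, heB⟩
        · exact ⟨Or.inr rfl, heH'⟩

end NearlyBinary
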